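/- Let H = lp E 2, let M be a bounded linear operator on H, and let ν : ℕ → ℕ → [0,∞] satisfy ‖π_i ∘ M ∘ ι_j‖ ≤ ν i j for all i, j. Define matrix powers of ν in [0,∞] by ν⁽¹⁾ := ν and ν⁽ᵏ⁺¹⁾ i j := Σ_{m=0}^∞ ν i m · ν⁽ᵏ⁾ m j (sums of extended nonnegative reals). Then for every integer k ≥ 1, every ψ ∈ H and every i ∈ ℕ: ‖π_i (Mᵏ ψ)‖ ≤ Σ_{j=0}^∞ ν⁽ᵏ⁾ i j · ‖π_j ψ‖, an inequality in [0,∞]. (The paper's lemma that powers of an operator on a Hilbert sum are dominated entrywise by the powers of any dominating scalar matrix.) -/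

import Mathlib

/-!
Since `φ = Σ_j ι_j (φ j)` in `lp E 2`, the `i`-th coordinate of `T φ` is the convergent series
`Σ_j T^i_j (φ j)`; the triangle inequality, taken in `[0,∞]` so that no summability of the norms
is needed, bounds its norm by `Σ_j ν i j ‖φ j‖`. Iterating this one-step bound and exchanging the
order of two sums of nonnegative terms gives the bound for `M^k` with the matrix power `ν⁽ᵏ⁾`.
-/

open scoped ENNReal NNReal

/-- The canonical isometric inclusion `ι_i : E i → lp E 2` as a continuous linear map. -/
noncomputable def lpIncl (E : ℕ → Type*) [∀ i, NormedAddCommGroup (E i)]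
    [∀ i, InnerProductSpace ℂ (E i)] (i : ℕ) : E i →L[ℂ] lp E 2 :=
  LinearMap.mkContinuous
    { toFun := fun a => lp.single 2 i a
      map_add' := fun a b => by
        refine lp.ext (funext fun j => ?_)
        by_cases hj : j = i
        · subst hj
          simp [lp.single_apply_self]
        · simp [lp.single_apply_ne _ _ _ hj]
      map_smul' := fun c a => by simpa using lp.single_smul 2 i a c }
    1 (fun a => by
      have h := lp.norm_single (E := E) (p := 2) (by norm_num) i a
      rw [one_mul]
      exact h.le)

/-- The canonical coordinate projection `π_i : lp E 2 → E i` as a continuous linear map. -/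
noncomputable def lpProj (E : ℕ → Type*) [∀ i, NormedAddCommGroup (E i)]
    [∀ i, InnerProductSpace ℂ (E i)] (i : ℕ) : lp E 2 →L[ℂ] E i :=
  LinearMap.mkContinuous
    { toFun := fun ψ => ψ i
      map_add' := fun ψ φ => rfl
      map_smul' := fun c ψ => rfl }
    1 (fun ψ => by
      rw [one_mul]
      exact lp.norm_apply_le_norm (E := E) (p := 2) (by norm_num) ψ i)

/-- The `(i,j)` chaos-matrix entry `T^i_j = π_i ∘ T ∘ ι_j` of a bounded operator on `lp E 2`. -/
noncomputable def lpEntry {E : ℕ → Type*} [∀ i, NormedAddCommGroup (E i)]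
    [∀ i, InnerProductSpace ℂ (E i)] (T : lp E 2 →L[ℂ] lp E 2) (i j : ℕ) : E j →L[ℂ] E i :=
  (lpProj E i).comp (T.comp (lpIncl E j))

/-- Matrix powers of a scalar matrix with entries in `[0,∞]`: `nuPow ν n` is `ν^{n+1}`,
so `nuPow ν 0 = ν` and `(nuPow ν (n+1)) i j = Σ_m ν i m * (nuPow ν n) m j`. -/
noncomputable def nuPow (ν : ℕ → ℕ → ℝ≥0∞) : ℕ → ℕ → ℕ → ℝ≥0∞
  | 0, i, j => ν i j
  | (n + 1), i, j => ∑' m : ℕ, ν i m * nuPow ν n m j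

section

variable {E : ℕ → Type*} [∀ i, NormedAddCommGroup (E i)] [∀ i, InnerProductSpace ℂ (E i)]

theorem hasSum_lpEntry_apply (T : lp E 2 →L[ℂ] lp E 2) (φ : lp E 2) (i : ℕ) :
    HasSum (fun j => lpEntry T i j (φ j)) (T φ i) :=
  ((lp.hasSum_single (by norm_num) φ).mapL T).mapL (lpProj E i)

theorem coe_nnnorm_apply_le_tsum_of_lpEntry_le (T : lp E 2 →L[ℂ] lp E 2)
    {ν : ℕ → ℕ → ℝ≥0∞} (hdom : ∀ i j : ℕ, (‖lpEntry T i j‖₊ : ℝ≥0∞) ≤ ν i j)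
    (φ : lp E 2) (i : ℕ) :
    (‖T φ i‖₊ : ℝ≥0∞) ≤ ∑' j : ℕ, ν i j * (‖φ j‖₊ : ℝ≥0∞) :=
  (hasSum_lpEntry_apply T φ i).enorm_le_of_bounded ENNReal.summable.hasSum fun j =>
    calc ‖lpEntry T i j (φ j)‖ₑ ≤ ‖lpEntry T i j‖₊ * ‖φ j‖₊ := by
          exact_mod_cast (lpEntry T i j).le_opNNNorm (φ j)
      _ ≤ ν i j * ‖φ j‖₊ := by gcongr; exact hdom i j

end

theorem tsum_mul_tsum_nuPow_mul (ν : ℕ → ℕ → ℝ≥0∞) (n : ℕ) (z : ℕ → ℝ≥0∞) (i : ℕ) :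
    ∑' m, ν i m * ∑' j, nuPow ν n m j * z j = ∑' j, nuPow ν (n + 1) i j * z j := by
  simp_rw [← ENNReal.tsum_mul_left, ← mul_assoc]
  rw [ENNReal.tsum_comm]
  simp_rw [nuPow, ← ENNReal.tsum_mul_right]

theorem entrywise_domination_of_powers_general
    {E : ℕ → Type*} [∀ i, NormedAddCommGroup (E i)] [∀ i, InnerProductSpace ℂ (E i)]
    (M : lp E 2 →L[ℂ] lp E 2) (ν : ℕ → ℕ → ℝ≥0∞)
    (hdom : ∀ i j : ℕ, (‖lpEntry M i j‖₊ : ℝ≥0∞) ≤ ν i j)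
    (n : ℕ) (ψ : lp E 2) (i : ℕ) :
    (‖((M ^ (n + 1)) ψ) i‖₊ : ℝ≥0∞) ≤ ∑' j : ℕ, nuPow ν n i j * (‖ψ j‖₊ : ℝ≥0∞) := by
  induction n generalizing i with
  | zero =>
    rw [zero_add, pow_one]
    exact coe_nnnorm_apply_le_tsum_of_lpEntry_le M hdom ψ i
  | succ n ih =>
    calc (‖((M ^ (n + 2)) ψ) i‖₊ : ℝ≥0∞) = ‖M ((M ^ (n + 1)) ψ) i‖₊ := by
          rw [pow_succ']; rfl
      _ ≤ ∑' m, ν i m * (‖((M ^ (n + 1)) ψ) m‖₊ : ℝ≥0∞) :=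
          coe_nnnorm_apply_le_tsum_of_lpEntry_le M hdom _ i
      _ ≤ ∑' m, ν i m * ∑' j, nuPow ν n m j * (‖ψ j‖₊ : ℝ≥0∞) := by
          gcongr with m
          exact ih m
      _ = ∑' j, nuPow ν (n + 1) i j * (‖ψ j‖₊ : ℝ≥0∞) := tsum_mul_tsum_nuPow_mul ν n _ i

/-- Powers of an operator on a Hilbert sum are dominated entrywise by the powers of any
dominating scalar matrix: if `‖π_i ∘ M ∘ ι_j‖ ≤ ν i j` for all `i, j`, then for every
`k = n + 1 ≥ 1`, every `ψ` and every `i`, `‖π_i (M^k ψ)‖ ≤ Σ_j ν⁽ᵏ⁾ i j ‖π_j ψ‖` in `[0,∞]`. -/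
theorem entrywise_domination_of_powers
    {E : ℕ → Type*} [∀ i, NormedAddCommGroup (E i)] [∀ i, InnerProductSpace ℂ (E i)]
    [∀ i, CompleteSpace (E i)]
    (M : lp E 2 →L[ℂ] lp E 2) (ν : ℕ → ℕ → ℝ≥0∞)
    (hdom : ∀ i j : ℕ, (‖lpEntry M i j‖₊ : ℝ≥0∞) ≤ ν i j)
    (n : ℕ) (ψ : lp E 2) (i : ℕ) :
    (‖((M ^ (n + 1)) ψ) i‖₊ : ℝ≥0∞) ≤ ∑' j : ℕ, nuPow ν n i j * (‖ψ j‖₊ : ℝ≥0∞) :=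
  entrywise_domination_of_powers_general M ν hdom n ψ i
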